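/- The graph G₁₆ is 2K2-free: there do not exist four distinct vertices a, b, c, d of G₁₆ such that ab and cd are edges of G₁₆ while ac, ad, bc, bd are all non-edges of G₁₆. -/

import Mathlib

/-- The 7-colouring `α` of the 16 vertices, given by the sequence
`1,2,3,4,5,7,2,3,4,5,1,2,3,4,6,7` at positions `0,…,15`. -/
def α16 : ZMod 16 → Fin 7 :=
  fun i => ![1, 2, 3, 4, 5, 7, 2, 3, 4, 5, 1, 2, 3, 4, 6, 7] ⟨i.val, ZMod.val_lt i⟩

open Fin.NatCast in
/-- The 8-colouring `β` given by `β i = i mod 8`. -/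
def β16 : ZMod 16 → Fin 8 := fun i => (i.val : Fin 8)

/-- The graph `G₁₆` on `ZMod 16`: `i` is adjacent to `j` iff `i ≠ j` and either the circular
distance between `i` and `j` is at most `4`, or both `α16 i ≠ α16 j` and `β16 i ≠ β16 j`. -/
def G16 : SimpleGraph (ZMod 16) where
  Adj i j := i ≠ j ∧
    (min (i - j).val (j - i).val ≤ 4 ∨ (α16 i ≠ α16 j ∧ β16 i ≠ β16 j))
  symm := ⟨by
    rintro i j ⟨h1, h2⟩
    refine ⟨h1.symm, ?_⟩
    rcases h2 with h | ⟨ha, hb⟩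
    · exact Or.inl (by rwa [min_comm])
    · exact Or.inr ⟨ha.symm, hb.symm⟩⟩
  loopless := ⟨fun i h => h.1 rfl⟩

/-!
The complement of `G₁₆` is covered by the perfect matching `i ↦ i + 8` (the pairs with equal `β`)
and the colour classes of `α`, and each colour class of `α` is an independent set of `G₁₆`, since
its members are at circular distance at least `5`. A `2K₂` of `G₁₆` is an induced `4`-cycle of the
complement. Two consecutive edges of that cycle cannot both be matching edges (the matching is
a function), and they cannot both lie in colour classes (the diagonal would then be a non-edge).
So the cycle alternates between the two kinds, and that gives an edge `ab` of `G₁₆` with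
`α (a + 8) = α b` and `α (b + 8) = α a`. Checking the 16 vertices shows that no such edge exists.
-/

namespace SimpleGraph

variable {V C : Type*} {G : SimpleGraph V} {f : V → V} {κ : V → C}

theorem alternates_of_not_adj_of_not_adj (hf : Function.Involutive f)
    (hnonadj : ∀ i j, i ≠ j → ¬ G.Adj i j → j = f i ∨ κ i = κ j)
    (hκ : ∀ i j, κ i = κ j → ¬ G.Adj i j)
    {x y z : V} (hxy : x ≠ y) (hyz : y ≠ z) (hxz : G.Adj x z)
    (h₁ : ¬ G.Adj x y) (h₂ : ¬ G.Adj y z) :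
    (y = f x ∧ κ y = κ z) ∨ (κ x = κ y ∧ z = f y) := by
  rcases hnonadj x y hxy h₁ with hy | hxy' <;> rcases hnonadj y z hyz h₂ with hz | hyz'
  · rw [hz, hy, hf x] at hxz
    exact (G.irrefl hxz).elim
  · exact .inl ⟨hy, hyz'⟩
  · exact .inr ⟨hxy', hz⟩
  · exact absurd hxz (hκ x z (hxy'.trans hyz'))

theorem exists_adj_swap_of_induced_two_edges (hf : Function.Involutive f)
    (hnonadj : ∀ i j, i ≠ j → ¬ G.Adj i j → j = f i ∨ κ i = κ j)
    (hκ : ∀ i j, κ i = κ j → ¬ G.Adj i j)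
    {a b c d : V} (hac : a ≠ c) (had : a ≠ d) (hbc : b ≠ c) (hbd : b ≠ d) (hcd : c ≠ d)
    (hab : G.Adj a b) (h_ac : ¬ G.Adj a c) (h_ad : ¬ G.Adj a d)
    (h_bc : ¬ G.Adj b c) (h_bd : ¬ G.Adj b d) :
    ∃ x y, G.Adj x y ∧ κ (f x) = κ y ∧ κ (f y) = κ x := by
  rcases alternates_of_not_adj_of_not_adj hf hnonadj hκ hac hbc.symm hab h_ac
      (fun h => h_bc h.symm) with ⟨rfl, hcb⟩ | ⟨hac', hbc'⟩ <;>
    rcases alternates_of_not_adj_of_not_adj hf hnonadj hκ had hbd.symm hab h_ad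
      (fun h => h_bd h.symm) with ⟨rfl, hdb⟩ | ⟨had', hbd'⟩
  · exact absurd rfl hcd
  · exact ⟨a, b, hab, hcb, hf.eq_iff.mp hbd'.symm ▸ had'.symm⟩
  · exact ⟨a, b, hab, hdb, hf.eq_iff.mp hbc'.symm ▸ hac'.symm⟩
  · exact absurd ((hf.eq_iff.mp hbc'.symm).trans (hf.eq_iff.mp hbd'.symm).symm) hcd

end SimpleGraph

instance : DecidableRel G16.Adj :=
  fun _ _ => inferInstanceAs (Decidable (_ ∧ _))

theorem add_eight_involutive : Function.Involutive (fun i : ZMod 16 => i + 8) := by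
  intro i
  change i + 8 + 8 = i
  rw [add_assoc]
  exact add_eq_left.mpr (by decide)

theorem G16_not_adj (i j : ZMod 16) (hij : i ≠ j) (h : ¬ G16.Adj i j) :
    j = i + 8 ∨ α16 i = α16 j := by
  revert i j; decide

theorem G16_not_adj_of_α16_eq (i j : ZMod 16) (h : α16 i = α16 j) : ¬ G16.Adj i j := by
  revert i j; decide

theorem G16_not_exists_adj_swap :
    ¬ ∃ x y, G16.Adj x y ∧ α16 (x + 8) = α16 y ∧ α16 (y + 8) = α16 x := by
  decide

/-- `G₁₆` is `2K₂`-free. -/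
theorem statement5 :
    ¬ ∃ a b c d : ZMod 16,
        a ≠ b ∧ a ≠ c ∧ a ≠ d ∧ b ≠ c ∧ b ≠ d ∧ c ≠ d ∧
        G16.Adj a b ∧ G16.Adj c d ∧
        ¬ G16.Adj a c ∧ ¬ G16.Adj a d ∧ ¬ G16.Adj b c ∧ ¬ G16.Adj b d := by
  rintro ⟨a, b, c, d, -, hac, had, hbc, hbd, hcd, hab, -, h_ac, h_ad, h_bc, h_bd⟩
  exact G16_not_exists_adj_swap <|
    SimpleGraph.exists_adj_swap_of_induced_two_edges add_eight_involutive G16_not_adj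
      G16_not_adj_of_α16_eq hac had hbc hbd hcd hab h_ac h_ad h_bc h_bd
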